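/- (Proposition 4.) Define the per-step returns by Z_{H+1} = 0 and Z_h = R_h + γ Z_{h+1} for h = H, H-1, …, 1. Then the mutual information between the trajectory and the sequence of returns equals the sum of conditional entropies of each reward given the subsequent returns: I((τ_1, …, τ_H); (Z_1, …, Z_H)) = Σ_{h=1}^{H} H(R_h | (Z_{h+1}, …, Z_H)), where for h = H the conditioning tuple is empty and the summand is the unconditional entropy H(R_H). -/
import Mathlib


open MeasureTheory

/-- Shannon entropy of a random variable `X` (taking finitely many values)
defined on a probability space `(Ω, μ)`. -/
noncomputable def entropy {Ω : Type*} [MeasurableSpace Ω] (μ : Measure Ω)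
    {S : Type*} (X : Ω → S) : ℝ :=
  -∑' x : S, ((μ (X ⁻¹' {x})).toReal * Real.log (μ (X ⁻¹' {x})).toReal)

/-- Conditional entropy `H(X | Y) = H(X, Y) - H(Y)`. -/
noncomputable def condEntropy {Ω : Type*} [MeasurableSpace Ω] (μ : Measure Ω)
    {S T : Type*} (X : Ω → S) (Y : Ω → T) : ℝ :=
  entropy μ (fun ω => (X ω, Y ω)) - entropy μ Y

/-- Mutual information `I(X ; Y) = H(X) + H(Y) - H(X, Y)`. -/
noncomputable def mutualInfo {Ω : Type*} [MeasurableSpace Ω] (μ : Measure Ω)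
    {S T : Type*} (X : Ω → S) (Y : Ω → T) : ℝ :=
  entropy μ X + entropy μ Y - entropy μ (fun ω => (X ω, Y ω))

/-- Conditional mutual information `I(X ; Y | Z) = H(X | Z) - H(X | (Y, Z))`. -/
noncomputable def condMutualInfo {Ω : Type*} [MeasurableSpace Ω] (μ : Measure Ω)
    {S T U : Type*} (X : Ω → S) (Y : Ω → T) (Z : Ω → U) : ℝ :=
  condEntropy μ X Z - condEntropy μ X (fun ω => (Y ω, Z ω))

set_option maxHeartbeats 400000 in
lemma entropy_comp_injective {Ω : Type*} [MeasurableSpace Ω] (μ : Measure Ω)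
    {B C : Type*} (Y : Ω → B) (e : B → C) (he : Function.Injective e) :
    entropy μ (fun ω => e (Y ω)) = entropy μ Y := by
  unfold entropy
  congr 1
  refine (he.tsum_eq ?_).symm.trans ?_
  · intro c hc
    by_contra hcr
    have : (fun ω => e (Y ω)) ⁻¹' {c} = ∅ := by
      ext ω; simp only [Set.mem_preimage, Set.mem_singleton_iff, Set.mem_empty_iff_false,
        iff_false]
      intro h; exact hcr ⟨Y ω, h⟩
    simp [Function.mem_support, this] at hc
  · refine tsum_congr fun b => ?_
    have : (fun ω => e (Y ω)) ⁻¹' {e b} = Y ⁻¹' {b} := by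
      ext ω; simp [he.eq_iff]
    rw [this]

lemma entropy_unique {Ω : Type*} [MeasurableSpace Ω] (μ : Measure Ω)
    [IsProbabilityMeasure μ] {S : Type*} [Unique S] (Y : Ω → S) :
    entropy μ Y = 0 := by
  unfold entropy
  rw [tsum_eq_single default (fun b hb => absurd (Unique.eq_default b) hb)]
  have : Y ⁻¹' {default} = Set.univ := by
    ext ω; simp [Unique.eq_default (Y ω)]
  simp [this]

/-- Proposition 4: with per-step returns defined by `Z_{H+1} = 0` and
`Z_h = R_h + γ Z_{h+1}`, the mutual information between the trajectory and the sequence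
of returns equals the sum of conditional entropies of each reward given the subsequent
returns: `I((τ_1,…,τ_H); (Z_1,…,Z_H)) = ∑_{h=1}^H H(R_h | (Z_{h+1},…,Z_H))`.
Indices are 0-based: step `h : Fin H` plays the role of step `h+1`, and the return
process is indexed by `ℕ` with `Z H = 0`. -/
theorem directed_information_reward_entropy {Ω : Type*} [MeasurableSpace Ω]
    (μ : Measure Ω) [IsProbabilityMeasure μ]
    {X : Type*} [Fintype X] [Nonempty X] [MeasurableSpace X] [MeasurableSingletonClass X]
    (H : ℕ) (τ : Fin H → Ω → X) (hτ : ∀ i, Measurable (τ i))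
    (r : Fin H → X → ℝ) (γ : ℝ)
    (Z : ℕ → Ω → ℝ)
    (hZtop : ∀ ω, Z H ω = 0)
    (hZrec : ∀ (h : Fin H) (ω : Ω), Z h ω = r h (τ h ω) + γ * Z ((h : ℕ) + 1) ω) :
    mutualInfo μ (fun ω => fun i : Fin H => τ i ω) (fun ω => fun i : Fin H => Z i ω)
      = ∑ h : Fin H,
          condEntropy μ (fun ω => r h (τ h ω))
            (fun ω => fun i : {i : Fin H // h < i} => Z (i : Fin H) ω) := by
    classical
  -- Z at indices ≤ H is determined by the trajectory
  have U : ∀ ω ω' : Ω, (∀ i, τ i ω = τ i ω') → ∀ k n, n + k = H → Z n ω = Z n ω' := by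
    intro ω ω' hττ k
    induction k with
    | zero => intro n hn; rw [Nat.add_zero] at hn; subst hn; rw [hZtop, hZtop]
    | succ k ih =>
      intro n hn
      have hnH : n < H := by omega
      have h1 : Z n ω = r ⟨n, hnH⟩ (τ ⟨n, hnH⟩ ω) + γ * Z (n + 1) ω := hZrec ⟨n, hnH⟩ ω
      have h2 : Z n ω' = r ⟨n, hnH⟩ (τ ⟨n, hnH⟩ ω') + γ * Z (n + 1) ω' := hZrec ⟨n, hnH⟩ ω'
      rw [h1, h2, hττ ⟨n, hnH⟩, ih (n + 1) (by omega)]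
  -- the deterministic map giving Z from the trajectory
  let φ : (Fin H → X) → (Fin H → ℝ) := fun x =>
    if hx : ∃ ω, (fun i => τ i ω) = x then fun i : Fin H => Z (i : ℕ) hx.choose else 0
  have hφ : ∀ ω, (fun i : Fin H => Z (i : ℕ) ω) = φ (fun i => τ i ω) := by
    intro ω
    have hx : ∃ ω', (fun i => τ i ω') = (fun i => τ i ω) := ⟨ω, rfl⟩
    simp only [φ, dif_pos hx]
    funext i
    exact (U hx.choose ω (fun j => congrFun hx.choose_spec j) (H - (i : ℕ)) (i : ℕ)
      (by have := i.isLt; omega)).symm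
  -- tail entropies
  set E : ℕ → ℝ := fun n =>
    entropy μ (fun ω => fun i : {i : Fin H // n ≤ ((i : Fin H) : ℕ)} => Z ((i : Fin H) : ℕ) ω)
    with hE
  -- LHS = E 0
  have hLHS : mutualInfo μ (fun ω => fun i : Fin H => τ i ω)
      (fun ω => fun i : Fin H => Z (i : ℕ) ω) = E 0 := by
    have hpair : entropy μ
        (fun ω => ((fun i : Fin H => τ i ω), fun i : Fin H => Z (i : ℕ) ω))
        = entropy μ (fun ω => fun i : Fin H => τ i ω) := by
      have heq : (fun ω => ((fun i : Fin H => τ i ω), fun i : Fin H => Z (i : ℕ) ω))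
          = fun ω => ((fun a => (a, φ a)) ((fun i : Fin H => τ i ω))) := by
        funext ω
        exact Prod.ext rfl (hφ ω)
      rw [heq]
      exact entropy_comp_injective μ _ (fun a => (a, φ a))
        (fun a b hab => congrArg Prod.fst hab)
    have hW : E 0 = entropy μ (fun ω => fun i : Fin H => Z (i : ℕ) ω) := by
      rw [hE]
      exact entropy_comp_injective μ (fun ω => fun i : Fin H => Z (i : ℕ) ω)
        (fun f => fun i : {i : Fin H // 0 ≤ ((i : Fin H) : ℕ)} => f (i : Fin H))
        (fun f g hfg => funext fun i => congrFun hfg ⟨i, Nat.zero_le _⟩)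
    unfold mutualInfo
    rw [hpair, hW]
    ring
  rw [hLHS]
  -- each summand is a difference of tail entropies
  have hsummand : ∀ h : Fin H,
      condEntropy μ (fun ω => r h (τ h ω))
        (fun ω => fun i : {i : Fin H // h < i} => Z ((i : Fin H) : ℕ) ω)
      = E (h : ℕ) - E ((h : ℕ) + 1) := by
    intro h
    -- the injection from the tail ≥ h to (reward, tail > h)
    let e1 : ({i : Fin H // (h : ℕ) ≤ ((i : Fin H) : ℕ)} → ℝ)
        → ℝ × ({i : Fin H // h < i} → ℝ) := fun f =>
      (f ⟨h, le_refl _⟩ - γ * (if p : (h : ℕ) + 1 < H then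
          f ⟨⟨(h : ℕ) + 1, p⟩, Nat.le_succ _⟩ else 0),
       fun j => f ⟨(j : Fin H), Nat.le_of_lt j.2⟩)
    have he1 : Function.Injective e1 := by
      intro f g hfg
      have h2 : ∀ j : {i : Fin H // h < i},
          f ⟨(j : Fin H), Nat.le_of_lt j.2⟩ = g ⟨(j : Fin H), Nat.le_of_lt j.2⟩ :=
        fun j => congrFun (congrArg Prod.snd hfg) j
      have hAB : (if p : (h : ℕ) + 1 < H then
            f ⟨⟨(h : ℕ) + 1, p⟩, Nat.le_succ _⟩ else 0)
          = (if p : (h : ℕ) + 1 < H then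
            g ⟨⟨(h : ℕ) + 1, p⟩, Nat.le_succ _⟩ else 0) := by
        split_ifs with p
        · exact h2 ⟨⟨(h : ℕ) + 1, p⟩, Nat.lt_succ_self _⟩
        · rfl
      have h1 : f ⟨h, le_refl _⟩ = g ⟨h, le_refl _⟩ := by
        have := congrArg Prod.fst hfg
        simp only [e1] at this
        rw [hAB] at this
        linarith
      funext x
      rcases x with ⟨i, hi⟩
      rcases eq_or_lt_of_le hi with heq | hlt
      · have : (⟨i, hi⟩ : {i : Fin H // (h : ℕ) ≤ ((i : Fin H) : ℕ)})
            = ⟨h, le_refl _⟩ := Subtype.ext (Fin.ext heq.symm)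
        rw [this]; exact h1
      · exact h2 ⟨i, hlt⟩
    have hpair : (fun ω => ((fun ω' => r h (τ h ω')) ω,
          (fun ω' => fun i : {i : Fin H // h < i} => Z ((i : Fin H) : ℕ) ω') ω))
        = fun ω => e1 (fun i : {i : Fin H // (h : ℕ) ≤ ((i : Fin H) : ℕ)} =>
            Z ((i : Fin H) : ℕ) ω) := by
      funext ω
      refine Prod.ext ?_ rfl
      show r h (τ h ω) = Z (h : ℕ) ω
        - γ * (if p : (h : ℕ) + 1 < H then Z ((h : ℕ) + 1) ω else 0)
      have hif : (if p : (h : ℕ) + 1 < H then Z ((h : ℕ) + 1) ω else 0)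
          = Z ((h : ℕ) + 1) ω := by
        split_ifs with p
        · rfl
        · have : (h : ℕ) + 1 = H := by have := h.isLt; omega
          rw [this, hZtop]
      rw [hif]
      have := hZrec h ω
      linarith
    have hC : entropy μ (fun ω => fun i : {i : Fin H // h < i} => Z ((i : Fin H) : ℕ) ω)
        = E ((h : ℕ) + 1) := by
      rw [hE]
      exact (entropy_comp_injective μ
        (fun ω => fun i : {i : Fin H // (h : ℕ) + 1 ≤ ((i : Fin H) : ℕ)} =>
          Z ((i : Fin H) : ℕ) ω)
        (fun f => fun j : {i : Fin H // h < i} => f ⟨(j : Fin H), j.2⟩)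
        (fun f g hfg => funext fun x => congrFun hfg ⟨(x : Fin H), x.2⟩)).symm
    have hRC : entropy μ (fun ω => e1
        (fun i : {i : Fin H // (h : ℕ) ≤ ((i : Fin H) : ℕ)} => Z ((i : Fin H) : ℕ) ω))
        = E (h : ℕ) := by
      rw [hE]
      exact entropy_comp_injective μ
        (fun ω => fun i : {i : Fin H // (h : ℕ) ≤ ((i : Fin H) : ℕ)} =>
          Z ((i : Fin H) : ℕ) ω) e1 he1
    unfold condEntropy
    rw [hC, hpair, hRC]
  calc E 0 = E 0 - E H := by
        have hEH : E H = 0 := by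
          haveI : IsEmpty {i : Fin H // H ≤ ((i : Fin H) : ℕ)} :=
            ⟨fun x => absurd x.2 (Nat.not_le.mpr x.1.isLt)⟩
          rw [hE]
          exact entropy_unique μ _
        rw [hEH]; ring
    _ = ∑ k ∈ Finset.range H, (E k - E (k + 1)) := (Finset.sum_range_sub' E H).symm
    _ = ∑ h : Fin H, (E (h : ℕ) - E ((h : ℕ) + 1)) :=
        (Fin.sum_univ_eq_sum_range (fun k => E k - E (k + 1)) H).symm
    _ = _ := by
        refine Finset.sum_congr rfl fun h _ => (hsummand h).symm
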